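/- arXiv:1106.2638 — 5 statements merged into one kernel-verified Lean document; each statement's English description precedes it below -/
import Mathlib

section
/- Let R be a G-graded associative ring that is graded prime and let I be a minimal graded left ideal of R. Then there exists a homogeneous idempotent ε of degree e (the identity of G) such that I = Rε. -/
/-- If `R` is a `G`-graded ring that is graded prime and `I` is a minimal
graded left ideal of `R`, then `I = Rε` for a homogeneous idempotent `ε` of degree `e`.
A subset is "graded" iff it is contained in the additive closure of its homogeneous
elements. -/
theorem graded_prime_minimal_graded_left_ideal_eq_span_idempotent
    {G : Type*} [Group G] [DecidableEq G] {R : Type*} [Ring R]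
    (𝒜 : G → AddSubgroup R)
    (hmul : ∀ g h : G, ∀ x ∈ 𝒜 g, ∀ y ∈ 𝒜 h, x * y ∈ 𝒜 (g * h))
    (hone : (1 : R) ∈ 𝒜 1)
    (hdecomp : DirectSum.IsInternal 𝒜)
    -- `R` is graded prime: nonzero graded two-sided ideals have nonzero product
    (hprime : ∀ I J : Submodule R R,
      (∀ x ∈ I, ∀ r : R, x * r ∈ I) → (∀ x ∈ J, ∀ r : R, x * r ∈ J) →
      (∀ x ∈ I, x ∈ AddSubgroup.closure {y : R | y ∈ I ∧ ∃ g, y ∈ 𝒜 g}) →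
      (∀ x ∈ J, x ∈ AddSubgroup.closure {y : R | y ∈ J ∧ ∃ g, y ∈ 𝒜 g}) →
      I ≠ ⊥ → J ≠ ⊥ → ∃ x ∈ I, ∃ y ∈ J, x * y ≠ 0)
    -- `I` is a minimal graded left ideal
    (I : Submodule R R)
    (hIgr : ∀ x ∈ I, x ∈ AddSubgroup.closure {y : R | y ∈ I ∧ ∃ g, y ∈ 𝒜 g})
    (hIne : I ≠ ⊥)
    (hImin : ∀ J : Submodule R R,
      (∀ x ∈ J, x ∈ AddSubgroup.closure {y : R | y ∈ J ∧ ∃ g, y ∈ 𝒜 g}) →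
      J ≤ I → J = ⊥ ∨ J = I) :
    ∃ ε : R, ε ∈ 𝒜 1 ∧ ε * ε = ε ∧ I = Submodule.span R {ε} := by
  classical
  -- set up the graded ring structure over the additive version of `G`
  let ℬ : Additive G → AddSubgroup R := fun g => 𝒜 (Additive.toMul g)
  haveI : SetLike.GradedMonoid ℬ :=
    { one_mem := hone
      mul_mem := fun {i j} {gi gj} hi hj => hmul _ _ _ hi _ hj }
  have hBint : DirectSum.IsInternal ℬ := hdecomp
  haveI : GradedRing ℬ := { ‹SetLike.GradedMonoid ℬ› with
    toDecomposition := hBint.chooseDecomposition }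
  have hprodr : ∀ (i j : Additive G) (w a : R), a ∈ ℬ j →
      (DirectSum.decompose ℬ (w * a) (i + j) : R) = (DirectSum.decompose ℬ w i : R) * a :=
    fun i j w a ha => DirectSum.coe_decompose_mul_add_of_right_mem ℬ ha
  -- homogeneous components of elements of `I` belong to `I`
  have hIcomp : ∀ x ∈ I, ∀ i : Additive G, (DirectSum.decompose ℬ x i : R) ∈ I := by
    intro x hx
    refine AddSubgroup.closure_induction
      (p := fun y _ => ∀ i : Additive G, (DirectSum.decompose ℬ y i : R) ∈ I)
      ?_ ?_ ?_ ?_ (hIgr x hx)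
    · rintro y ⟨hyI, g, hyg⟩ i
      by_cases h : Additive.ofMul g = i
      · rw [← h, DirectSum.decompose_of_mem_same ℬ (show y ∈ ℬ (Additive.ofMul g) from hyg)]
        exact hyI
      · rw [DirectSum.decompose_of_mem_ne ℬ (show y ∈ ℬ (Additive.ofMul g) from hyg) h]
        exact I.zero_mem
    · intro i
      rw [DirectSum.decompose_zero]
      simp
    · intro u v _ _ hu hv i
      rw [DirectSum.decompose_add]
      simpa using I.add_mem (hu i) (hv i)
    · intro u _ hu i
      rw [DirectSum.decompose_neg, neg_eq_zero_sub, DirectSum.sub_apply]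
      simpa [DirectSum.zero_apply, zero_sub] using I.neg_mem (hu i)
  -- a submodule whose elements have all components inside it is graded
  have hgr_of_comp : ∀ J : Submodule R R,
      (∀ x ∈ J, ∀ i : Additive G, (DirectSum.decompose ℬ x i : R) ∈ J) →
      ∀ x ∈ J, x ∈ AddSubgroup.closure {y : R | y ∈ J ∧ ∃ g, y ∈ 𝒜 g} := by
    intro J hJ x hx
    rw [← DirectSum.sum_support_decompose ℬ x]
    exact AddSubgroup.sum_mem _ fun i _ =>
      AddSubgroup.subset_closure ⟨hJ x hx i, Additive.toMul i, SetLike.coe_mem _⟩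
  -- the two-sided ideal generated by `I`
  set S : Set R := {z : R | ∃ x ∈ I, ∃ r : R, z = x * r} with hSdef
  have hS_mul : ∀ s z : R, z ∈ S → s * z ∈ S := by
    rintro s z ⟨x, hx, r, rfl⟩
    exact ⟨s * x, I.smul_mem s hx, r, (mul_assoc s x r).symm⟩
  let T : Submodule R R :=
    { carrier := (AddSubgroup.closure S : Set R)
      zero_mem' := AddSubgroup.zero_mem _
      add_mem' := fun h1 h2 => AddSubgroup.add_mem _ h1 h2
      smul_mem' := by
        intro s z hz
        simp only [smul_eq_mul]
        refine AddSubgroup.closure_induction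
          (p := fun y _ => s * y ∈ AddSubgroup.closure S) ?_ ?_ ?_ ?_ hz
        · exact fun y hy => AddSubgroup.subset_closure (hS_mul s y hy)
        · show s * 0 ∈ AddSubgroup.closure S
          rw [mul_zero]; exact AddSubgroup.zero_mem _
        · intro u v _ _ hu hv; rw [mul_add]; exact AddSubgroup.add_mem _ hu hv
        · intro u _ hu; rw [mul_neg]; exact AddSubgroup.neg_mem _ hu }
  have hTmem : ∀ z : R, z ∈ T ↔ z ∈ AddSubgroup.closure S := fun _ => Iff.rfl
  have hIT : ∀ x ∈ I, x ∈ T := fun x hx =>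
    AddSubgroup.subset_closure ⟨x, hx, 1, (mul_one x).symm⟩
  -- T is closed under right multiplication
  have hTr : ∀ z ∈ T, ∀ r : R, z * r ∈ T := by
    intro z hz r
    rw [hTmem] at hz ⊢
    refine AddSubgroup.closure_induction
      (p := fun y _ => y * r ∈ AddSubgroup.closure S) ?_ ?_ ?_ ?_ hz
    · rintro y ⟨x, hx, r', rfl⟩
      exact AddSubgroup.subset_closure ⟨x, hx, r' * r, mul_assoc x r' r⟩
    · show (0 : R) * r ∈ AddSubgroup.closure S
      rw [zero_mul]; exact AddSubgroup.zero_mem _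
    · intro u v _ _ hu hv; rw [add_mul]; exact AddSubgroup.add_mem _ hu hv
    · intro u _ hu; rw [neg_mul]; exact AddSubgroup.neg_mem _ hu
  -- T is graded
  have hTgr : ∀ z ∈ T, z ∈ AddSubgroup.closure {y : R | y ∈ T ∧ ∃ g, y ∈ 𝒜 g} := by
    intro z hz
    rw [hTmem] at hz
    refine AddSubgroup.closure_induction
      (p := fun y _ => y ∈ AddSubgroup.closure {y : R | y ∈ T ∧ ∃ g, y ∈ 𝒜 g})
      ?_ ?_ ?_ ?_ hz
    · rintro z ⟨x, hx, r, rfl⟩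
      refine AddSubgroup.closure_induction
        (p := fun x' _ => x' * r ∈ AddSubgroup.closure {y : R | y ∈ T ∧ ∃ g, y ∈ 𝒜 g})
        ?_ ?_ ?_ ?_ (hIgr x hx)
      · rintro y ⟨hyI, g, hyg⟩
        have hsum : y * r =
            ∑ i ∈ (DirectSum.decompose ℬ r).support, y * (DirectSum.decompose ℬ r i : R) := by
          rw [← Finset.mul_sum, DirectSum.sum_support_decompose]
        rw [hsum]
        refine AddSubgroup.sum_mem _ fun i _ => AddSubgroup.subset_closure
          ⟨AddSubgroup.subset_closure ⟨y, hyI, _, rfl⟩,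
           g * Additive.toMul i, hmul _ _ _ hyg _ (SetLike.coe_mem _)⟩
      · show (0 : R) * r ∈ _
        rw [zero_mul]; exact AddSubgroup.zero_mem _
      · intro u v _ _ hu hv; rw [add_mul]; exact AddSubgroup.add_mem _ hu hv
      · intro u _ hu; rw [neg_mul]; exact AddSubgroup.neg_mem _ hu
    · exact AddSubgroup.zero_mem _
    · intro u v _ _ hu hv; exact AddSubgroup.add_mem _ hu hv
    · intro u _ hu; exact AddSubgroup.neg_mem _ hu
  -- T is nonzero
  obtain ⟨x₀, hx₀I, hx₀⟩ := Submodule.exists_mem_ne_zero_of_ne_bot hIne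
  have hTne : T ≠ ⊥ := by
    intro h
    have hx := hIT x₀ hx₀I
    rw [h] at hx
    exact hx₀ ((Submodule.mem_bot R).mp hx)
  -- graded primeness gives us a nonzero product inside T
  obtain ⟨u, hu, v, hv, huv⟩ := hprime T T hTr hTr hTgr hTgr hTne hTne
  -- hence a nonzero product inside I
  have hxy : ∃ x ∈ I, ∃ y ∈ I, x * y ≠ 0 := by
    by_contra hcon
    push_neg at hcon
    have claimA : ∀ t ∈ T, ∀ x ∈ I, x * t = 0 := by
      intro t ht
      rw [hTmem] at ht
      refine AddSubgroup.closure_induction (p := fun t _ => ∀ x ∈ I, x * t = 0)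
        ?_ ?_ ?_ ?_ ht
      · rintro t ⟨x', hx', r, rfl⟩ x hx
        rw [← mul_assoc, hcon x hx x' hx', zero_mul]
      · intro x _; show x * 0 = 0; rw [mul_zero]
      · intro s t' _ _ hs ht' x hx; rw [mul_add, hs x hx, ht' x hx, add_zero]
      · intro s _ hs x hx; rw [mul_neg, hs x hx, neg_zero]
    have : u * v = 0 := by
      have hu' := (hTmem u).mp hu
      refine AddSubgroup.closure_induction (p := fun w _ => w * v = 0) ?_ ?_ ?_ ?_ hu'
      · rintro w ⟨x, hx, r, rfl⟩
        rw [mul_assoc]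
        have hrv : r * v ∈ T := by simpa [smul_eq_mul] using T.smul_mem r hv
        exact claimA (r * v) hrv x hx
      · show (0 : R) * v = 0; rw [zero_mul]
      · intro s t' _ _ hs ht'; rw [add_mul, hs, ht', add_zero]
      · intro s _ hs; rw [neg_mul, hs, neg_zero]
    exact huv this
  obtain ⟨x, hxI, y, hyI, hxy0⟩ := hxy
  -- find a homogeneous component `a` of `y` with `x * a ≠ 0`
  obtain ⟨i, hia⟩ : ∃ i : Additive G, x * (DirectSum.decompose ℬ y i : R) ≠ 0 := by
    by_contra hc
    push_neg at hc
    apply hxy0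
    calc x * y
        = ∑ i ∈ (DirectSum.decompose ℬ y).support, x * (DirectSum.decompose ℬ y i : R) := by
          rw [← Finset.mul_sum, DirectSum.sum_support_decompose]
      _ = 0 := Finset.sum_eq_zero fun i _ => hc i
  set a : R := (DirectSum.decompose ℬ y i : R) with hadef
  have haB : a ∈ ℬ i := SetLike.coe_mem _
  have haI : a ∈ I := hIcomp y hyI i
  have hxa : x * a ≠ 0 := hia
  have ha0 : a ≠ 0 := fun h => hxa (by rw [h, mul_zero])
  -- the graded left ideal `I * a`
  let Ia : Submodule R R :=
    { carrier := {z : R | ∃ w ∈ I, w * a = z}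
      zero_mem' := ⟨0, I.zero_mem, zero_mul a⟩
      add_mem' := by
        rintro z1 z2 ⟨w1, hw1, rfl⟩ ⟨w2, hw2, rfl⟩
        exact ⟨w1 + w2, I.add_mem hw1 hw2, add_mul w1 w2 a⟩
      smul_mem' := by
        rintro s z ⟨w, hw, rfl⟩
        exact ⟨s * w, I.smul_mem s hw, by rw [smul_eq_mul, mul_assoc]⟩ }
  have hIagr : ∀ z ∈ Ia, z ∈ AddSubgroup.closure {y : R | y ∈ Ia ∧ ∃ g, y ∈ 𝒜 g} := by
    rintro z ⟨w, hw, rfl⟩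
    refine AddSubgroup.closure_induction
      (p := fun w' _ => w' * a ∈ AddSubgroup.closure {y : R | y ∈ Ia ∧ ∃ g, y ∈ 𝒜 g})
      ?_ ?_ ?_ ?_ (hIgr w hw)
    · rintro w' ⟨hw'I, g, hw'g⟩
      exact AddSubgroup.subset_closure
        ⟨⟨w', hw'I, rfl⟩, g * Additive.toMul i, hmul _ _ _ hw'g _ haB⟩
    · show (0 : R) * a ∈ _
      rw [zero_mul]; exact AddSubgroup.zero_mem _
    · intro p q _ _ hp hq; rw [add_mul]; exact AddSubgroup.add_mem _ hp hq
    · intro p _ hp; rw [neg_mul]; exact AddSubgroup.neg_mem _ hp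
  have hIaI : Ia ≤ I := by
    rintro z ⟨w, hw, rfl⟩
    simpa [smul_eq_mul] using I.smul_mem w haI
  have hIane : Ia ≠ ⊥ := by
    intro h
    apply hxa
    have : x * a ∈ Ia := ⟨x, hxI, rfl⟩
    rw [h] at this
    simpa using this
  have hIaeq : Ia = I := (hImin Ia hIagr hIaI).resolve_left hIane
  obtain ⟨ε, hεI, hεa⟩ : ∃ ε ∈ I, ε * a = a := by
    have : a ∈ Ia := hIaeq ▸ haI
    exact this
  -- the degree-one component of ε
  set ε₁ : R := (DirectSum.decompose ℬ ε (0 : Additive G) : R) with hε₁def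
  have hε₁I : ε₁ ∈ I := hIcomp ε hεI 0
  have hε₁𝒜 : ε₁ ∈ 𝒜 1 := SetLike.coe_mem _
  have hε₁a : ε₁ * a = a := by
    have h1 : (DirectSum.decompose ℬ (ε * a) ((0 : Additive G) + i) : R) = ε₁ * a :=
      hprodr 0 i ε a haB
    rw [hεa, zero_add, DirectSum.decompose_of_mem_same ℬ haB] at h1
    exact h1.symm
  have hε₁ne : ε₁ ≠ 0 := by
    intro h
    apply ha0
    rw [← hε₁a, h, zero_mul]
  -- the left annihilator of `a` inside `I`
  let L : Submodule R R :=
    { carrier := {w : R | w ∈ I ∧ w * a = 0}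
      zero_mem' := ⟨I.zero_mem, zero_mul a⟩
      add_mem' := by
        rintro w1 w2 ⟨h1, e1⟩ ⟨h2, e2⟩
        exact ⟨I.add_mem h1 h2, by rw [add_mul, e1, e2, add_zero]⟩
      smul_mem' := by
        rintro s w ⟨hw, e⟩
        exact ⟨I.smul_mem s hw, by rw [smul_eq_mul, mul_assoc, e, mul_zero]⟩ }
  have hLgr : ∀ w ∈ L, w ∈ AddSubgroup.closure {y : R | y ∈ L ∧ ∃ g, y ∈ 𝒜 g} := by
    refine hgr_of_comp L ?_
    rintro w ⟨hwI, hwa⟩ j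
    refine ⟨hIcomp w hwI j, ?_⟩
    have := hprodr j i w a haB
    rw [hwa] at this
    rw [← this, DirectSum.decompose_zero]
    simp
  have hLne : L ≠ I := by
    intro h
    rw [← h] at hxI
    exact hxa hxI.2
  have hLbot : L = ⊥ := (hImin L hLgr fun w hw => hw.1).resolve_right hLne
  -- idempotency
  have hidem : ε₁ * ε₁ = ε₁ := by
    have hδ : ε₁ * ε₁ - ε₁ ∈ L := by
      refine ⟨I.sub_mem ?_ hε₁I, ?_⟩
      · simpa [smul_eq_mul] using I.smul_mem ε₁ hε₁I
      · rw [sub_mul, mul_assoc, hε₁a, hε₁a, sub_self]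
    rw [hLbot] at hδ
    have := (Submodule.mem_bot R).mp hδ
    exact sub_eq_zero.mp this
  -- the span of ε₁ is a graded nonzero left ideal inside I
  set P : Submodule R R := Submodule.span R {ε₁} with hPdef
  have hPgr : ∀ z ∈ P, z ∈ AddSubgroup.closure {y : R | y ∈ P ∧ ∃ g, y ∈ 𝒜 g} := by
    intro z hz
    obtain ⟨c, rfl⟩ := Submodule.mem_span_singleton.mp hz
    have hsum : c • ε₁ =
        ∑ j ∈ (DirectSum.decompose ℬ c).support, (DirectSum.decompose ℬ c j : R) * ε₁ := by
      rw [← Finset.sum_mul, DirectSum.sum_support_decompose, smul_eq_mul]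
    rw [hsum]
    refine AddSubgroup.sum_mem _ fun j _ => AddSubgroup.subset_closure
      ⟨?_, Additive.toMul j * 1, hmul _ _ _ (SetLike.coe_mem _) _ hε₁𝒜⟩
    exact Submodule.mem_span_singleton.mpr ⟨(DirectSum.decompose ℬ c j : R), rfl⟩
  have hPI : P ≤ I := Submodule.span_le.mpr (Set.singleton_subset_iff.mpr hε₁I)
  have hPne : P ≠ ⊥ := by
    intro h
    apply hε₁ne
    have : ε₁ ∈ P := Submodule.mem_span_singleton_self ε₁
    rw [h] at this
    simpa using this
  have hPeq : P = I := (hImin P hPgr hPI).resolve_left hPne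
  exact ⟨ε₁, hε₁𝒜, hidem, hPeq.symm⟩
end

section
/- Let R be a graded primitive G-graded ring with a minimal graded left ideal I, and let V be a faithful graded simple left R-module. Then there exists g ∈ G such that V is isomorphic, as a graded R-module, to the right shift I^{[g]} (where I^{[g]}_h = I_{hg^{-1}}). -/
/-!
Pick `x ≠ 0` in `I`. By faithfulness `x • w ≠ 0` for some `w`, hence `x • v ≠ 0` for some
homogeneous `v ∈ V_k`. Because `v` is homogeneous, the degree-`gk` component of `r • v` is
`r_g • v`; so the image `I • v` and the kernel `{r ∈ I | r • v = 0}` of `r ↦ r • v` are graded.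
As `x • v ≠ 0`, the image is nonzero and the kernel is not all of `I`, so graded simplicity
of `V` and graded minimality of `I` make `r ↦ r • v` an isomorphism `I ≃ V`, which sends `I_h` into `V_{hk}`.
-/

open DirectSum

section Decomposition

variable {ι M σ P : Type*} [DecidableEq ι] [AddCommGroup M] [SetLike σ M] [AddSubgroupClass σ M]
  (ℳ : ι → σ) [Decomposition ℳ] [SetLike P M] [AddSubgroupClass P M]

theorem SetLike.isHomogeneous_iff_forall_mem_closure (p : P) :
    SetLike.IsHomogeneous ℳ p ↔
      ∀ x ∈ p, x ∈ AddSubgroup.closure {y : M | y ∈ p ∧ ∃ i, y ∈ ℳ i} := by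
  classical
  constructor
  · intro hp x hx
    rw [← sum_support_decompose ℳ x]
    exact sum_mem fun i _ => AddSubgroup.subset_closure ⟨hp i hx, i, (decompose ℳ x i).2⟩
  · intro hp i x hx
    have hcl := hp x hx
    clear hx
    induction hcl using AddSubgroup.closure_induction with
    | mem y hy =>
      obtain ⟨hyp, j, hyj⟩ := hy
      by_cases hji : j = i
      · rwa [← hji, decompose_of_mem_same ℳ hyj]
      · rw [decompose_of_mem_ne ℳ hyj hji]
        exact zero_mem p
    | zero => simp
    | add y z _ _ hy hz => simpa using add_mem hy hz
    | neg y _ hy =>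
      rw [decompose_neg, DFinsupp.neg_apply, NegMemClass.coe_neg]
      exact neg_mem hy

end Decomposition

section SMul

variable {ι R V σ : Type*} [DecidableEq ι] [Semiring R] [AddCommMonoid V] [Module R V]
  [SetLike σ V] [AddSubmonoidClass σ V] (𝒱 : ι → σ) [Decomposition 𝒱]

theorem DirectSum.exists_mem_smul_ne_zero {r : R} {v : V} (h : r • v ≠ 0) :
    ∃ k, ∃ w ∈ 𝒱 k, r • w ≠ 0 := by
  classical
  by_contra! H
  apply h
  rw [← sum_support_decompose 𝒱 v, Finset.smul_sum]
  exact Finset.sum_eq_zero fun k _ => H k _ (decompose 𝒱 v k).2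

variable {𝒱} in
theorem Submodule.IsHomogeneous.inf {p q : Submodule R V}
    (hp : p.IsHomogeneous 𝒱) (hq : q.IsHomogeneous 𝒱) : (p ⊓ q).IsHomogeneous 𝒱 :=
  fun i _ hm => ⟨hp i hm.1, hq i hm.2⟩

end SMul

section GradedModule

variable {G R V σA σV : Type*} [Group G] [DecidableEq G] [Ring R] [AddCommGroup V] [Module R V]
  [SetLike σA R] [AddSubgroupClass σA R] (𝒜 : G → σA) [Decomposition 𝒜]
  [SetLike σV V] [AddSubgroupClass σV V] (𝒱 : G → σV) [Decomposition 𝒱]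

variable {𝒜 𝒱} (hsmul : ∀ g h : G, ∀ r ∈ 𝒜 g, ∀ v ∈ 𝒱 h, r • v ∈ 𝒱 (g * h))
include hsmul

theorem DirectSum.decompose_smul_of_mem {k : G} {v : V} (hv : v ∈ 𝒱 k) (r : R) (g : G) :
    (decompose 𝒱 (r • v) (g * k) : V) = (decompose 𝒜 r g : R) • v := by
  induction r using Decomposition.inductionOn 𝒜 with
  | zero => simp
  | @homogeneous j r =>
    obtain ⟨r, hr⟩ := r
    by_cases hjg : j = g
    · subst hjg
      rw [decompose_of_mem_same 𝒱 (hsmul _ _ _ hr _ hv), decompose_of_mem_same 𝒜 hr]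
    · rw [decompose_of_mem_ne 𝒱 (hsmul _ _ _ hr _ hv) (by simpa using hjg),
        decompose_of_mem_ne 𝒜 hr hjg, zero_smul]
  | add r s hr hs => simp [add_smul, hr, hs]

theorem DirectSum.isHomogeneous_ker_toSpanSingleton {k : G} {v : V} (hv : v ∈ 𝒱 k) :
    (LinearMap.ker (LinearMap.toSpanSingleton R V v)).IsHomogeneous 𝒜 := by
  intro g r hr
  simp only [LinearMap.mem_ker, LinearMap.toSpanSingleton_apply] at hr ⊢
  rw [← decompose_smul_of_mem hsmul hv, hr, decompose_zero, zero_apply, ZeroMemClass.coe_zero]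

theorem DirectSum.isHomogeneous_map_toSpanSingleton {k : G} {v : V} (hv : v ∈ 𝒱 k)
    {I : Submodule R R} (hI : I.IsHomogeneous 𝒜) :
    (I.map (LinearMap.toSpanSingleton R V v)).IsHomogeneous 𝒱 := by
  rintro g _ ⟨r, hrI, rfl⟩
  refine ⟨decompose 𝒜 r (g * k⁻¹), hI _ hrI, ?_⟩
  simp only [LinearMap.toSpanSingleton_apply]
  rw [← decompose_smul_of_mem hsmul hv, inv_mul_cancel_right]

end GradedModule

theorem faithful_graded_simple_module_iso_shift_of_minimal_graded_left_ideal_general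
    {G : Type*} [Group G] [DecidableEq G] {R : Type*} [Ring R]
    (𝒜 : G → AddSubgroup R)
    (hdecomp : DirectSum.IsInternal 𝒜)
    -- `I` is a minimal graded left ideal
    (I : Submodule R R)
    (hIgr : ∀ x ∈ I, x ∈ AddSubgroup.closure {y : R | y ∈ I ∧ ∃ g, y ∈ 𝒜 g})
    (hIne : I ≠ ⊥)
    (hImin : ∀ J : Submodule R R,
      (∀ x ∈ J, x ∈ AddSubgroup.closure {y : R | y ∈ J ∧ ∃ g, y ∈ 𝒜 g}) →
      J ≤ I → J = ⊥ ∨ J = I)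
    -- `V` is a faithful graded simple left `R`-module (witnessing graded primitivity)
    {V : Type*} [AddCommGroup V] [Module R V]
    (𝒱 : G → AddSubgroup V)
    (hVdecomp : DirectSum.IsInternal 𝒱)
    (hVsmul : ∀ g h : G, ∀ r ∈ 𝒜 g, ∀ v ∈ 𝒱 h, r • v ∈ 𝒱 (g * h))
    (hfaithful : ∀ r : R, (∀ v : V, r • v = 0) → r = 0)
    (hVsimple : ∀ W : Submodule R V,
      (∀ x ∈ W, x ∈ AddSubgroup.closure {y : V | y ∈ W ∧ ∃ g, y ∈ 𝒱 g}) →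
      W = ⊥ ∨ W = ⊤) :
    ∃ (g : G) (e : I ≃ₗ[R] V), ∀ (h : G) (x : I), (x : R) ∈ 𝒜 h → e x ∈ 𝒱 (h * g) := by
  let := hdecomp.chooseDecomposition
  let := hVdecomp.chooseDecomposition
  have hIhom : I.IsHomogeneous 𝒜 := (SetLike.isHomogeneous_iff_forall_mem_closure 𝒜 I).mpr hIgr
  obtain ⟨x, hxI, hx⟩ := Submodule.exists_mem_ne_zero_of_ne_bot hIne
  obtain ⟨w, hxw⟩ := not_forall.mp (mt (hfaithful x) hx)
  obtain ⟨k, v, hv, hxv⟩ := exists_mem_smul_ne_zero 𝒱 hxw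
  set f := LinearMap.toSpanSingleton R V v
  have hsurj : I.map f = ⊤ := by
    refine (hVsimple _ ((SetLike.isHomogeneous_iff_forall_mem_closure 𝒱 _).mp
      (isHomogeneous_map_toSpanSingleton hVsmul hv hIhom))).resolve_left ?_
    exact (Submodule.ne_bot_iff _).mpr ⟨x • v, ⟨x, hxI, rfl⟩, hxv⟩
  have hinj : I ⊓ LinearMap.ker f = ⊥ := by
    refine (hImin _ ((SetLike.isHomogeneous_iff_forall_mem_closure 𝒜 _).mp
      (hIhom.inf (isHomogeneous_ker_toSpanSingleton hVsmul hv))) inf_le_left).resolve_right ?_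
    exact fun hI => hxv (hI.ge hxI).2
  refine ⟨k, LinearEquiv.ofBijective (f.domRestrict I)
    ⟨LinearMap.injective_domRestrict_iff.mpr (disjoint_iff.mpr hinj),
      LinearMap.range_eq_top.mp ((LinearMap.range_domRestrict I f).trans hsurj)⟩, ?_⟩
  exact fun h y hy => hVsmul h k _ hy v hv

/-- If `R` is a graded primitive `G`-graded ring with a minimal graded
left ideal `I` and `V` is a faithful graded simple left `R`-module, then `V ≅ I^{[g]}`
for some `g ∈ G`, i.e. there is an `R`-module isomorphism `I ≃ V` carrying the
degree-`h` component of `I` into the degree-`hg` component of `V`. -/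
theorem faithful_graded_simple_module_iso_shift_of_minimal_graded_left_ideal
    {G : Type*} [Group G] [DecidableEq G] {R : Type*} [Ring R]
    (𝒜 : G → AddSubgroup R)
    (hmul : ∀ g h : G, ∀ x ∈ 𝒜 g, ∀ y ∈ 𝒜 h, x * y ∈ 𝒜 (g * h))
    (hone : (1 : R) ∈ 𝒜 1)
    (hdecomp : DirectSum.IsInternal 𝒜)
    -- `I` is a minimal graded left ideal
    (I : Submodule R R)
    (hIgr : ∀ x ∈ I, x ∈ AddSubgroup.closure {y : R | y ∈ I ∧ ∃ g, y ∈ 𝒜 g})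
    (hIne : I ≠ ⊥)
    (hImin : ∀ J : Submodule R R,
      (∀ x ∈ J, x ∈ AddSubgroup.closure {y : R | y ∈ J ∧ ∃ g, y ∈ 𝒜 g}) →
      J ≤ I → J = ⊥ ∨ J = I)
    -- `V` is a faithful graded simple left `R`-module (witnessing graded primitivity)
    {V : Type*} [AddCommGroup V] [Module R V]
    (𝒱 : G → AddSubgroup V)
    (hVdecomp : DirectSum.IsInternal 𝒱)
    (hVsmul : ∀ g h : G, ∀ r ∈ 𝒜 g, ∀ v ∈ 𝒱 h, r • v ∈ 𝒱 (g * h))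
    (hfaithful : ∀ r : R, (∀ v : V, r • v = 0) → r = 0)
    (hVnz : ∃ (r : R) (v : V), r • v ≠ 0)
    (hVsimple : ∀ W : Submodule R V,
      (∀ x ∈ W, x ∈ AddSubgroup.closure {y : V | y ∈ W ∧ ∃ g, y ∈ 𝒱 g}) →
      W = ⊥ ∨ W = ⊤) :
    ∃ (g : G) (e : I ≃ₗ[R] V), ∀ (h : G) (x : I), (x : R) ∈ 𝒜 h → e x ∈ 𝒱 (h * g) :=
  faithful_graded_simple_module_iso_shift_of_minimal_graded_left_ideal_general 𝒜 hdecomp I hIgr hIne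
    hImin 𝒱 hVdecomp hVsmul hfaithful hVsimple
end

section
/- Let D be a finite-dimensional graded division algebra over an algebraically closed field F with abelian grading group G, support T, and D_e = F. If D admits an antiautomorphism preserving the grading (each D_t mapped to itself up to the grading structure, i.e., a degree-preserving antiautomorphism φ₀), then T is an elementary abelian 2-group, i.e., t² = e for all t ∈ T. -/
/-- Let `D` be a finite-dimensional `G`-graded division algebra over an
algebraically closed field `F` with abelian grading group `G`, support `T`, `D_e = F`,
and nondegenerate commutation bicharacter `β`.  If `D` admits a degree-preserving
antiautomorphism, then `T` is an elementary 2-group: `t² = e` for all `t ∈ T`. -/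
theorem graded_division_algebra_with_antiautomorphism_support_elementary_two_group
    {F : Type*} [Field F] [IsAlgClosed F]
    {G : Type*} [CommGroup G] [DecidableEq G]
    {D : Type*} [Ring D] [Algebra F D] [FiniteDimensional F D] [Nontrivial D]
    (𝒟 : G → Submodule F D)
    (hmul : ∀ g h : G, ∀ x ∈ 𝒟 g, ∀ y ∈ 𝒟 h, x * y ∈ 𝒟 (g * h))
    (hone : 𝒟 1 = (1 : Submodule F D))
    (hdecomp : DirectSum.IsInternal 𝒟)
    (hdiv : ∀ x : D, x ≠ 0 → (∃ g, x ∈ 𝒟 g) → IsUnit x)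
    (X : G → D)
    (hX : ∀ t : G, 𝒟 t ≠ ⊥ → X t ∈ 𝒟 t ∧ X t ≠ 0)
    (β : G → G → Fˣ)
    -- the commutation bicharacter of the grading
    (hβ : ∀ t t' : G, 𝒟 t ≠ ⊥ → 𝒟 t' ≠ ⊥ →
      X t * X t' = ((β t t' : F)) • (X t' * X t))
    -- `β` is nondegenerate
    (hnd : ∀ t : G, 𝒟 t ≠ ⊥ → t ≠ 1 → ∃ t' : G, 𝒟 t' ≠ ⊥ ∧ β t t' ≠ 1)
    -- a degree-preserving antiautomorphism `φ₀`
    (φ : D ≃ₗ[F] D)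
    (hanti : ∀ a b : D, φ (a * b) = φ b * φ a)
    (hgr : ∀ t : G, ∀ x ∈ 𝒟 t, φ x ∈ 𝒟 t) :
    ∀ t : G, 𝒟 t ≠ ⊥ → t * t = 1 := by
  classical
  letI dec := hdecomp.chooseDecomposition
  -- scalar cancellation
  have scancel : ∀ (a b : F) (v : D), v ≠ 0 → a • v = b • v → a = b := by
    intro a b v hv h
    by_contra hab
    have h0 : (a - b) • v = 0 := by rw [sub_smul, h, sub_self]
    have : v = 0 := by
      have := congrArg (fun w => (a - b)⁻¹ • w) h0
      simpa [smul_smul, inv_mul_cancel₀ (sub_ne_zero.mpr hab)] using this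
    exact hv this
  -- decomposition of products with a homogeneous element
  have hcomp : ∀ (t : G) (u : D), u ∈ 𝒟 t → ∀ (g : G) (x : D),
      (DirectSum.decompose 𝒟 (x * u) (g * t) : D)
        = (DirectSum.decompose 𝒟 x g : D) * u := by
    intro t u hu g
    refine DirectSum.Decomposition.inductionOn 𝒟 (by simp) (fun {i} m => ?_)
      (fun a b ha hb => ?_)
    · by_cases hig : i = g
      · subst hig
        rw [DirectSum.decompose_of_mem_same 𝒟 m.2,
            DirectSum.decompose_of_mem_same 𝒟 (hmul i t m m.2 u hu)]
      · rw [DirectSum.decompose_of_mem_ne 𝒟 m.2 hig,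
            DirectSum.decompose_of_mem_ne 𝒟 (hmul i t m m.2 u hu)
              (fun h => hig (mul_right_cancel h)), zero_mul]
    · rw [add_mul, DirectSum.decompose_add, DirectSum.add_apply, Submodule.coe_add, ha, hb,
        DirectSum.decompose_add, DirectSum.add_apply, Submodule.coe_add, add_mul]
  have h1mem : (1 : D) ∈ 𝒟 1 := by
    rw [hone]; exact Submodule.mem_one.mpr ⟨1, map_one _⟩
  -- inverse of a homogeneous unit is homogeneous
  have key : ∀ (t : G) (u : Dˣ), (u : D) ∈ 𝒟 t → ((↑u⁻¹ : D)) ∈ 𝒟 t⁻¹ := by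
    intro t u hu
    have hx : ∀ g : G, g ≠ t⁻¹ → (DirectSum.decompose 𝒟 ((↑u⁻¹ : D)) g : D) = 0 := by
      intro g hg
      have h1 := hcomp t (↑u) hu g ((↑u⁻¹ : D))
      rw [Units.inv_mul] at h1
      have hgt : (1 : G) ≠ g * t := fun h =>
        hg (mul_eq_one_iff_eq_inv.mp h.symm)
      rw [DirectSum.decompose_of_mem_ne 𝒟 h1mem hgt] at h1
      have := congrArg (fun w => w * (↑u⁻¹ : D)) h1
      simpa [mul_assoc] using this.symm
    rw [← DirectSum.sum_support_decompose 𝒟 ((↑u⁻¹ : D))]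
    apply Submodule.sum_mem
    intro g _
    by_cases h : g = t⁻¹
    · subst h; exact Submodule.coe_mem _
    · rw [hx g h]; exact zero_mem _
  -- one-dimensionality of homogeneous components
  have hdim : ∀ (t : G) (x y : D), x ∈ 𝒟 t → y ∈ 𝒟 t → y ≠ 0 → ∃ c : F, x = c • y := by
    intro t x y hxm hym hy
    obtain ⟨u, hu⟩ := hdiv y hy ⟨t, hym⟩
    have hinv : ((↑u⁻¹ : D)) ∈ 𝒟 t⁻¹ := key t u (by rw [hu]; exact hym)
    have hmem : x * (↑u⁻¹ : D) ∈ 𝒟 1 := by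
      have := hmul t t⁻¹ x hxm _ hinv
      rwa [mul_inv_cancel] at this
    rw [hone] at hmem
    obtain ⟨c, hc⟩ := Submodule.mem_one.mp hmem
    refine ⟨c, ?_⟩
    have h2 : x * (↑u⁻¹ : D) * (↑u : D) = algebraMap F D c * (↑u : D) := by rw [hc]
    rw [mul_assoc, Units.inv_mul, mul_one] at h2
    rw [h2, ← hu, ← Algebra.smul_def]
  -- the antiautomorphism acts by scalars on homogeneous elements
  have hphi : ∀ t : G, 𝒟 t ≠ ⊥ → ∃ c : F, c ≠ 0 ∧ φ (X t) = c • X t := by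
    intro t ht
    obtain ⟨hXm, hXne⟩ := hX t ht
    obtain ⟨c, hc⟩ := hdim t (φ (X t)) (X t) (hgr t _ hXm) hXm hXne
    refine ⟨c, fun h => ?_, hc⟩
    apply hXne
    apply φ.injective
    rw [hc, h, zero_smul, map_zero]
  -- products of the X's are nonzero
  have hXmul : ∀ t t' : G, 𝒟 t ≠ ⊥ → 𝒟 t' ≠ ⊥ → X t * X t' ≠ 0 := by
    intro t t' ht ht'
    obtain ⟨hXm, hXne⟩ := hX t ht
    obtain ⟨hXm', hXne'⟩ := hX t' ht'
    exact ((hdiv _ hXne ⟨t, hXm⟩).mul (hdiv _ hXne' ⟨t', hXm'⟩)).ne_zero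
  -- the bicharacter squares to one
  have hsq : ∀ t t' : G, 𝒟 t ≠ ⊥ → 𝒟 t' ≠ ⊥ → ((β t t' : F)) ^ 2 = 1 := by
    intro t t' ht ht'
    obtain ⟨c, hc0, hc⟩ := hphi t ht
    obtain ⟨c', hc0', hc'⟩ := hphi t' ht'
    have h1 := congrArg φ (hβ t t' ht ht')
    rw [hanti, map_smul, hanti, hc, hc'] at h1
    rw [smul_mul_smul_comm, smul_mul_smul_comm, hβ t t' ht ht'] at h1
    rw [smul_comm, smul_smul, smul_smul] at h1
    have h2 : c' * c = c * c' * (β t t' : F) * (β t t' : F) :=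
      scancel _ _ _ (hXmul t' t ht' ht) h1
    have hcc : c * c' ≠ 0 := mul_ne_zero hc0 hc0'
    have h3 : (c * c') * ((β t t' : F) ^ 2) = (c * c') * 1 := by
      rw [mul_one]; linear_combination -h2
    exact mul_left_cancel₀ hcc h3
  -- main argument
  intro t ht
  obtain ⟨hXm, hXne⟩ := hX t ht
  have hu : IsUnit (X t) := hdiv _ hXne ⟨t, hXm⟩
  have hsqmem : X t * X t ∈ 𝒟 (t * t) := hmul t t _ hXm _ hXm
  have hsqne : X t * X t ≠ 0 := (hu.mul hu).ne_zero
  have htt : 𝒟 (t * t) ≠ ⊥ := by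
    intro h
    exact hsqne (by rw [h] at hsqmem; simpa using hsqmem)
  by_contra hne
  obtain ⟨t', ht', hb⟩ := hnd (t * t) htt hne
  apply hb
  obtain ⟨hXm2, hXne2⟩ := hX (t * t) htt
  obtain ⟨c, hc⟩ := hdim (t * t) (X t * X t) (X (t * t)) hsqmem hXm2 hXne2
  have hc0 : c ≠ 0 := fun h => hsqne (by rw [hc, h, zero_smul])
  have hcomm : X t * X t * X t' = X t' * (X t * X t) := by
    calc X t * X t * X t' = X t * (X t * X t') := by rw [mul_assoc]
      _ = X t * ((β t t' : F) • (X t' * X t)) := by rw [hβ t t' ht ht']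
      _ = (β t t' : F) • (X t * X t' * X t) := by
          rw [mul_smul_comm, mul_assoc]
      _ = (β t t' : F) • (((β t t' : F) • (X t' * X t)) * X t) := by rw [hβ t t' ht ht']
      _ = ((β t t' : F) ^ 2) • (X t' * (X t * X t)) := by
          rw [smul_mul_assoc, smul_smul, sq, mul_assoc]
      _ = X t' * (X t * X t) := by rw [hsq t t' ht ht', one_smul]
  rw [hc, smul_mul_assoc, mul_smul_comm] at hcomm
  have hcomm2 : X (t * t) * X t' = X t' * X (t * t) := by
    have := congrArg (fun w => c⁻¹ • w) hcomm
    simpa [smul_smul, inv_mul_cancel₀ hc0] using this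
  have h4 : (β (t * t) t' : F) = 1 := by
    have h5 := hβ (t * t) t' htt ht'
    rw [hcomm2] at h5
    have := scancel 1 (β (t * t) t' : F) _ (hXmul t' (t * t) ht' htt)
      (by rw [one_smul]; exact h5)
    exact this.symm
  exact Units.ext h4
end

section
/- Let R be a simple associative algebra over a field F of characteristic ≠ 2 with zero center (e.g., R = F_Π(U) with U infinite-dimensional), and let L = [R, R] be its commutator Lie subalgebra, assumed to generate R as an associative algebra. If σ is the negative of an antiautomorphism of R whose restriction to L is the identity map, then σ = id, contradicting that σ is the negative of an antiautomorphism; consequently, no automorphism of the Lie algebra L extends both to an automorphism of R and to the negative of an antiautomorphism of R. -/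
/-- Let `R` be a simple associative `F`-algebra (`char F ≠ 2`) with zero
center whose commutator Lie subalgebra `L = [R,R]` generates `R` as an associative
algebra.  Then no Lie automorphism of `L` extends both to an automorphism `ψ` of `R`
and to the negative `-τ` of an antiautomorphism `τ` of `R`; equivalently, the
assumption that `ψ` and `-τ` agree on `L` leads to a contradiction. -/
theorem no_common_extension_automorphism_and_negative_antiautomorphism
    {F : Type*} [Field F] (hchar : (2 : F) ≠ 0)
    {R : Type*} [NonUnitalRing R] [Module F R] [SMulCommClass F R R] [IsScalarTower F R R]
    -- `R` is simple: `R² ≠ 0` and no nonzero proper two-sided ideals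
    (hsq : ∃ x y : R, x * y ≠ 0)
    (hsimple : ∀ J : Submodule F R,
      (∀ r : R, ∀ x ∈ J, r * x ∈ J ∧ x * r ∈ J) → J = ⊥ ∨ J = ⊤)
    -- `R` has zero center
    (hcenter : ∀ z : R, (∀ r : R, z * r = r * z) → z = 0)
    -- `L = [R,R]` generates `R` as an associative algebra
    (hgen : NonUnitalAlgebra.adjoin F {x : R | ∃ a b : R, x = a * b - b * a} = ⊤)
    -- an automorphism `ψ` of `R`
    (ψ : R ≃ₗ[F] R) (hψ : ∀ a b : R, ψ (a * b) = ψ a * ψ b)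
    -- an antiautomorphism `τ` of `R`
    (τ : R ≃ₗ[F] R) (hτ : ∀ a b : R, τ (a * b) = τ b * τ a)
    -- `ψ` and the negative of `τ` agree on `L`
    (hagree : ∀ x ∈ Submodule.span F {x : R | ∃ a b : R, x = a * b - b * a},
      ψ x = - τ x) :
    False := by
  classical
  set G : Set R := {x : R | ∃ a b : R, x = a * b - b * a} with hG
  set S : Submodule F R := Submodule.span F G with hS
  -- σ = ψ⁻¹ ∘ (−τ)
  set σ : R → R := fun r => ψ.symm (-(τ r)) with hσ
  -- ψ.symm is multiplicative
  have hψ' : ∀ a b : R, ψ.symm (a * b) = ψ.symm a * ψ.symm b := by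
    intro a b
    apply ψ.injective
    rw [hψ]
    simp
  -- σ fixes S pointwise
  have hfix : ∀ x ∈ S, σ x = x := by
    intro x hx
    have := hagree x hx
    simp only [hσ]
    rw [← this]
    simp
  -- σ is the negative of an antiautomorphism
  have hanti : ∀ a b : R, σ (a * b) = -(σ b * σ a) := by
    intro a b
    simp only [hσ]
    rw [hτ, ← hψ', neg_mul_neg]
    simp
  have hsub : ∀ a b : R, σ (a - b) = σ a - σ b := by
    intro a b
    simp only [hσ]
    rw [map_sub τ, neg_sub, map_sub ψ.symm, map_neg, map_neg]
    abel
  -- key commutation: for a commutator x and any r, [x, r - σ r] = 0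
  have key : ∀ (r x : R), x ∈ G → x * (r - σ r) = (r - σ r) * x := by
    intro r x hx
    have hxS : x ∈ S := Submodule.subset_span hx
    have hxfix : σ x = x := hfix x hxS
    have hcS : x * r - r * x ∈ S := Submodule.subset_span ⟨x, r, rfl⟩
    have h1 : σ (x * r - r * x) = x * r - r * x := hfix _ hcS
    have h2 : σ (x * r - r * x) = x * σ r - σ r * x := by
      rw [hsub, hanti, hanti, hxfix]
      abel
    have h : x * r - r * x = x * σ r - σ r * x := by rw [← h1, h2]
    rw [mul_sub, sub_mul, sub_eq_sub_iff_sub_eq_sub]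
    exact h
  -- hence r - σ r commutes with every element of S
  have hScomm : ∀ r : R, ∀ x ∈ S, x * (r - σ r) = (r - σ r) * x := by
    intro r x hx
    induction hx using Submodule.span_induction with
    | mem x hxG => exact key r x hxG
    | zero => simp
    | add u v _ _ hu hv => rw [add_mul, mul_add, hu, hv]
    | smul c u _ hu => rw [smul_mul_assoc, hu, mul_smul_comm]
  -- the centralizer of r - σ r is a non-unital subalgebra
  have hallcomm : ∀ r y : R, y * (r - σ r) = (r - σ r) * y := by
    intro r
    set c : R := r - σ r with hc
    let C : NonUnitalSubalgebra F R :=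
      { carrier := {y : R | y * c = c * y}
        add_mem' := fun {u v} hu hv => by
          simp only [Set.mem_setOf_eq] at *
          rw [add_mul, mul_add, hu, hv]
        zero_mem' := by simp
        smul_mem' := fun t {u} hu => by
          simp only [Set.mem_setOf_eq] at *
          rw [smul_mul_assoc, hu, mul_smul_comm]
        mul_mem' := fun {u v} hu hv => by
          simp only [Set.mem_setOf_eq] at *
          rw [mul_assoc, hv, ← mul_assoc, hu, mul_assoc] }
    have hGC : G ⊆ C := by
      intro x hx
      exact hScomm r x (Submodule.subset_span hx)
    have hle : NonUnitalAlgebra.adjoin F G ≤ C := NonUnitalAlgebra.adjoin_le hGC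
    intro y
    have hy : y ∈ C := hle (by rw [hgen]; trivial)
    exact hy
  -- the center is zero, so σ = id
  have hid : ∀ r : R, σ r = r := by
    intro r
    have : r - σ r = 0 := hcenter _ (fun y => (hallcomm r y).symm)
    have := sub_eq_zero.mp this
    exact this.symm
  -- anticommutativity
  have hac : ∀ a b : R, a * b = -(b * a) := by
    intro a b
    have := hanti a b
    rw [hid, hid, hid] at this
    exact this
  -- triple products vanish
  have htriple : ∀ a b c : R, (a * b) * c = 0 := by
    intro a b c
    have h1 : (a * b) * c = (b * c) * a := by
      rw [hac (a * b) c, ← mul_assoc, hac (c * a) b, neg_neg, mul_assoc]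
    have h2 : (a * b) * c = -((b * c) * a) := by
      rw [mul_assoc, hac a (b * c)]
    have h3 : (b * c) * a + (b * c) * a = 0 := by
      have := h1.symm.trans h2
      rw [eq_neg_iff_add_eq_zero] at this
      exact this
    have h4 : (2 : F) • ((b * c) * a) = 0 := by
      rw [two_smul]; exact h3
    have h5 : (b * c) * a = 0 := by
      have := congrArg (fun z => (2 : F)⁻¹ • z) h4
      simpa [smul_smul, inv_mul_cancel₀ hchar] using this
    rw [h1]; exact h5
  -- every product is central, hence zero — contradiction with hsq
  obtain ⟨x, y, hxy⟩ := hsq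
  apply hxy
  apply hcenter
  intro r
  rw [htriple x y r]
  rw [show r * (x * y) = (r * x) * y by rw [mul_assoc], htriple r x y]
end

section
/- Let G be a group, R a G-graded algebra, D a G-graded division algebra, V a graded right D-vector space, and W ⊆ V^{gr*} a total graded subspace, with F_W^{gr}(V) ⊆ R ⊆ L_W^{gr}(V). Then F_W^{gr}(V) is a graded two-sided ideal of L_W^{gr}(V) and is graded simple; consequently R is graded simple if and only if R = F_W^{gr}(V). -/
section

variable {G : Type*} [Group G] {V : Type*} [AddCommGroup V]

/-- An operator `A` on a `G`-graded abelian group `V` is homogeneous (of some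
degree `t`) if it shifts every homogeneous component by `t`. -/
def IsHomogeneousOp (𝒱 : G → AddSubgroup V) (A : V → V) : Prop :=
  ∃ t : G, ∀ g : G, ∀ v ∈ 𝒱 g, A v ∈ 𝒱 (t * g)

variable {D : Type*} [Ring D] [Module Dᵐᵒᵖ V]

/-- A subgroup of operators is graded if each of its elements lies in the additive
closure of its homogeneous elements. -/
def IsGradedOpSubgroup (𝒱 : G → AddSubgroup V)
    (S : AddSubgroup (Module.End Dᵐᵒᵖ V)) : Prop :=
  ∀ x ∈ S, x ∈ AddSubgroup.closure
    {y : Module.End Dᵐᵒᵖ V | y ∈ S ∧ IsHomogeneousOp 𝒱 (⇑y)}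

/-- `T` is a two-sided ideal of `S` (inside `End_D(V)`). -/
def IsIdealOf (S T : AddSubgroup (Module.End Dᵐᵒᵖ V)) : Prop :=
  T ≤ S ∧ ∀ a ∈ S, ∀ x ∈ T, a * x ∈ T ∧ x * a ∈ T

/-- `S` is graded simple: `S² ≠ 0` and `S` has no nonzero proper graded two-sided
ideals. -/
def IsGradedSimpleOpSubgroup (𝒱 : G → AddSubgroup V)
    (S : AddSubgroup (Module.End Dᵐᵒᵖ V)) : Prop :=
  (∃ x ∈ S, ∃ y ∈ S, x * y ≠ 0) ∧
  ∀ T : AddSubgroup (Module.End Dᵐᵒᵖ V),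
    IsIdealOf S T → IsGradedOpSubgroup 𝒱 T → T = ⊥ ∨ T = S

end

/-!
The operators `v ⊗ w : u ↦ v (w, u)` satisfy `A (v ⊗ w) = A v ⊗ w`, `(v ⊗ w) A = v ⊗ A* w`
when the adjoint of `A` preserves `W`, and `(v ⊗ w)(v' ⊗ w') = v (w, v') ⊗ w'`; hence `F` is an
ideal of `L`. If `y` is a nonzero homogeneous element of a graded ideal `T` of `F`, choose a
homogeneous `u` with `y u ≠ 0` and, by totality, a homogeneous `w₀` with `(w₀, y u) ≠ 0`. This
scalar is homogeneous in the graded division ring `D`, hence a unit `e`, and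
`v ⊗ w = (v e⁻¹ ⊗ w₀) y (u ⊗ w) ∈ T` for all `v, w`, so `T = F`. Finally `F` is a nonzero graded
ideal of every `R` between `F` and `L`, so graded simplicity of `R` forces `R = F`.
-/

open MulOpposite

section Grading

variable {G : Type*} [DecidableEq G] {V : Type*} [AddCommGroup V] {𝒱 : G → AddSubgroup V}

theorem DirectSum.IsInternal.induction_on (h : DirectSum.IsInternal 𝒱) {P : V → Prop}
    (zero : P 0) (add : ∀ a b, P a → P b → P (a + b)) (mem : ∀ g, ∀ v ∈ 𝒱 g, P v) (v : V) :
    P v := by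
  obtain ⟨x, rfl⟩ := h.surjective v
  induction x using DirectSum.induction_on with
  | zero => simpa using zero
  | of g x => simpa using mem g x.1 x.2
  | add a b ha hb => rw [map_add]; exact add _ _ ha hb

theorem DirectSum.IsInternal.exists_apply_ne_zero {M : Type*} [AddMonoid M]
    (h : DirectSum.IsInternal 𝒱) {f : V →+ M} (hf : f ≠ 0) : ∃ g, ∃ v ∈ 𝒱 g, f v ≠ 0 := by
  by_contra! hzero
  refine hf (AddMonoidHom.ext fun v => h.induction_on (map_zero f) ?_ hzero v)
  intro a b ha hb
  rw [map_add, ha, hb, add_zero]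

end Grading

section Operators

variable {G : Type*} [Group G] {D : Type*} [Ring D] {V : Type*} [AddCommGroup V]
  [Module Dᵐᵒᵖ V] {𝒱 : G → AddSubgroup V}

theorem IsGradedOpSubgroup.exists_isHomogeneousOp_ne_zero
    {T : AddSubgroup (Module.End Dᵐᵒᵖ V)} (hT : IsGradedOpSubgroup 𝒱 T) (hT0 : T ≠ ⊥) :
    ∃ y ∈ T, IsHomogeneousOp 𝒱 y ∧ y ≠ 0 := by
  by_contra! h
  refine hT0 (eq_bot_iff.2 fun x hx => (AddSubgroup.closure_le ⊥).2 ?_ (hT x hx))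
  rintro y ⟨hyT, hy⟩
  exact h y hyT hy

theorem isGradedSimpleOpSubgroup_iff_eq_of_isIdealOf {R F : AddSubgroup (Module.End Dᵐᵒᵖ V)}
    (hF : IsIdealOf R F) (hFgr : IsGradedOpSubgroup 𝒱 F)
    (hFsimple : IsGradedSimpleOpSubgroup 𝒱 F) : IsGradedSimpleOpSubgroup 𝒱 R ↔ R = F := by
  refine ⟨fun hR => ?_, fun h => h ▸ hFsimple⟩
  obtain ⟨x, hx, y, -, hxy⟩ := hFsimple.1
  rcases hR.2 F hF hFgr with hbot | hFR
  · rw [hbot, AddSubgroup.mem_bot] at hx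
    exact absurd (by rw [hx, zero_mul]) hxy
  · exact hFR.symm

end Operators

structure IsPairing {D V W : Type*} [Ring D] [AddCommGroup V] [Module Dᵐᵒᵖ V] [AddCommGroup W]
    [Module D W] (B : W → V → D) : Prop where
  add_left : ∀ w w' v, B (w + w') v = B w v + B w' v
  add_right : ∀ w v v', B w (v + v') = B w v + B w v'
  smul_left : ∀ (d : D) w v, B (d • w) v = d * B w v
  smul_right : ∀ w v (d : D), B w (op d • v) = B w v * d

namespace IsPairing

variable {D V W : Type*} [Ring D] [AddCommGroup V] [Module Dᵐᵒᵖ V] [AddCommGroup W] [Module D W]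
  {B : W → V → D}

theorem zero_left (hB : IsPairing B) (v : V) : B 0 v = 0 := by
  simpa using hB.add_left 0 0 v

variable (hB : IsPairing B)

/-- The operator `v ⊗ w : u ↦ v (w, u)`. -/
def rankOne (v : V) (w : W) : Module.End Dᵐᵒᵖ V where
  toFun u := op (B w u) • v
  map_add' u u' := by rw [hB.add_right, op_add, add_smul]
  map_smul' m u := by
    rw [RingHom.id_apply, ← op_unop m, hB.smul_right, op_mul, mul_smul]

@[simp]
theorem rankOne_apply (v : V) (w : W) (u : V) : hB.rankOne v w u = op (B w u) • v := rfl

theorem rankOne_add_left (v v' : V) (w : W) :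
    hB.rankOne (v + v') w = hB.rankOne v w + hB.rankOne v' w := by
  ext; simp [smul_add]

theorem rankOne_add_right (v : V) (w w' : W) :
    hB.rankOne v (w + w') = hB.rankOne v w + hB.rankOne v w' := by
  ext; simp [hB.add_left, add_smul]

theorem rankOne_zero_left (w : W) : hB.rankOne 0 w = 0 := by
  ext; simp

theorem rankOne_zero_right (v : V) : hB.rankOne v 0 = 0 := by
  ext; simp [hB.zero_left]

theorem mul_rankOne (A : Module.End Dᵐᵒᵖ V) (v : V) (w : W) :
    A * hB.rankOne v w = hB.rankOne (A v) w := by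
  ext; simp

theorem rankOne_mul_rankOne (v : V) (w : W) (v' : V) (w' : W) :
    hB.rankOne v w * hB.rankOne v' w' = hB.rankOne (op (B w v') • v) w' := by
  ext; simp

theorem rankOne_mul_of_adjoint {A : Module.End Dᵐᵒᵖ V} {w w' : W}
    (hA : ∀ u, B w (A u) = B w' u) (v : V) : hB.rankOne v w * A = hB.rankOne v w' := by
  ext; simp [hA]

theorem rankOne_mul_rankOne_of_eq_unit {w₀ : W} {x : V} {e : Dˣ} (he : B w₀ x = e) (v : V)
    (w : W) : hB.rankOne (op (↑e⁻¹ : D) • v) w₀ * hB.rankOne x w = hB.rankOne v w := by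
  rw [rankOne_mul_rankOne, he, smul_smul, ← op_mul, Units.inv_mul, op_one, one_smul]

end IsPairing

section FinitaryOps

variable {G : Type*} {D : Type*} [Ring D] {V : Type*} [AddCommGroup V]
  [Module Dᵐᵒᵖ V] {W : Type*} [AddCommGroup W] [Module D W]

/-- `F_W^{gr}(V)`. -/
def finitaryOps (𝒱 : G → AddSubgroup V) (𝒲 : G → AddSubgroup W) (B : W → V → D) :
    AddSubgroup (Module.End Dᵐᵒᵖ V) :=
  AddSubgroup.closure {A : Module.End Dᵐᵒᵖ V | ∃ g₁ g₂ : G, ∃ v ∈ 𝒱 g₁,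
    ∃ w ∈ 𝒲 g₂, ∀ u : V, A u = op (B w u) • v}

variable {𝒱 : G → AddSubgroup V} {𝒲 : G → AddSubgroup W} {B : W → V → D}

theorem finitaryOps_le_iff (hB : IsPairing B) {S : AddSubgroup (Module.End Dᵐᵒᵖ V)} :
    finitaryOps 𝒱 𝒲 B ≤ S ↔ ∀ g₁ g₂ : G, ∀ v ∈ 𝒱 g₁, ∀ w ∈ 𝒲 g₂, hB.rankOne v w ∈ S := by
  rw [finitaryOps, AddSubgroup.closure_le]
  constructor
  · intro h g₁ g₂ v hv w hw
    exact h ⟨g₁, g₂, v, hv, w, hw, fun _ => rfl⟩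
  · rintro h A ⟨g₁, g₂, v, hv, w, hw, hA⟩
    obtain rfl : A = hB.rankOne v w := LinearMap.ext hA
    exact h g₁ g₂ v hv w hw

theorem rankOne_mem_finitaryOps [DecidableEq G] (hB : IsPairing B) (h𝒱 : DirectSum.IsInternal 𝒱)
    (h𝒲 : DirectSum.IsInternal 𝒲) (v : V) (w : W) : hB.rankOne v w ∈ finitaryOps 𝒱 𝒲 B := by
  refine h𝒱.induction_on (P := fun v => ∀ w, hB.rankOne v w ∈ finitaryOps 𝒱 𝒲 B)
    (fun w => by simp [hB.rankOne_zero_left, zero_mem])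
    (fun a b ha hb w => by simpa [hB.rankOne_add_left] using add_mem (ha w) (hb w)) ?_ v w
  intro g₁ v hv w
  refine h𝒲.induction_on (P := fun w => hB.rankOne v w ∈ finitaryOps 𝒱 𝒲 B)
    (by simp [hB.rankOne_zero_right, zero_mem])
    (fun a b ha hb => by simpa [hB.rankOne_add_right] using add_mem ha hb) ?_ w
  exact fun g₂ w hw => (finitaryOps_le_iff hB).1 le_rfl g₁ g₂ v hv w hw

theorem mul_mem_finitaryOps [DecidableEq G] (hB : IsPairing B) (h𝒱 : DirectSum.IsInternal 𝒱)
    (h𝒲 : DirectSum.IsInternal 𝒲) (a : Module.End Dᵐᵒᵖ V) {x : Module.End Dᵐᵒᵖ V}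
    (hx : x ∈ finitaryOps 𝒱 𝒲 B) : a * x ∈ finitaryOps 𝒱 𝒲 B := by
  refine (finitaryOps_le_iff hB (S := (finitaryOps 𝒱 𝒲 B).comap (AddMonoidHom.mulLeft a))).2
    (fun _ _ v _ w _ => ?_) hx
  rw [AddSubgroup.mem_comap, AddMonoidHom.coe_mulLeft, hB.mul_rankOne]
  exact rankOne_mem_finitaryOps hB h𝒱 h𝒲 _ w

variable [Group G]

/-- `L_W^{gr}(V)`. -/
def adjointableOps (𝒱 : G → AddSubgroup V) (B : W → V → D) : AddSubgroup (Module.End Dᵐᵒᵖ V) :=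
  AddSubgroup.closure {A : Module.End Dᵐᵒᵖ V | IsHomogeneousOp 𝒱 (⇑A) ∧
    ∀ w : W, ∃ w' : W, ∀ v : V, B w (A v) = B w' v}

variable {𝒟 : G → AddSubgroup D}

theorem isHomogeneousOp_rankOne (hB : IsPairing B)
    (hVsmul : ∀ g h : G, ∀ v ∈ 𝒱 g, ∀ d ∈ 𝒟 h, op d • v ∈ 𝒱 (g * h))
    (hBgr : ∀ a b : G, ∀ w ∈ 𝒲 a, ∀ v ∈ 𝒱 b, B w v ∈ 𝒟 (a * b)) {g₁ g₂ : G} {v : V} {w : W}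
    (hv : v ∈ 𝒱 g₁) (hw : w ∈ 𝒲 g₂) :
    IsHomogeneousOp 𝒱 (hB.rankOne v w) :=
  ⟨g₁ * g₂, fun g u hu => by
    rw [mul_assoc]
    exact hVsmul _ _ v hv _ (hBgr _ _ w hw u hu)⟩

theorem finitaryOps_le_adjointableOps (hB : IsPairing B)
    (hVsmul : ∀ g h : G, ∀ v ∈ 𝒱 g, ∀ d ∈ 𝒟 h, op d • v ∈ 𝒱 (g * h))
    (hBgr : ∀ a b : G, ∀ w ∈ 𝒲 a, ∀ v ∈ 𝒱 b, B w v ∈ 𝒟 (a * b)) :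
    finitaryOps 𝒱 𝒲 B ≤ adjointableOps 𝒱 B := by
  refine (finitaryOps_le_iff hB).2 fun g₁ g₂ v hv w hw => AddSubgroup.subset_closure
    ⟨isHomogeneousOp_rankOne hB hVsmul hBgr hv hw, fun w₀ => ⟨B w₀ v • w, fun u => ?_⟩⟩
  rw [hB.rankOne_apply, hB.smul_right, hB.smul_left]

theorem isGradedOpSubgroup_finitaryOps [DecidableEq G] (hB : IsPairing B)
    (h𝒱 : DirectSum.IsInternal 𝒱) (h𝒲 : DirectSum.IsInternal 𝒲)
    (hVsmul : ∀ g h : G, ∀ v ∈ 𝒱 g, ∀ d ∈ 𝒟 h, op d • v ∈ 𝒱 (g * h))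
    (hBgr : ∀ a b : G, ∀ w ∈ 𝒲 a, ∀ v ∈ 𝒱 b, B w v ∈ 𝒟 (a * b)) :
    IsGradedOpSubgroup 𝒱 (finitaryOps 𝒱 𝒲 B) := by
  intro x hx
  refine (finitaryOps_le_iff hB).2 (fun _ _ v hv w hw => AddSubgroup.subset_closure ?_) hx
  exact ⟨rankOne_mem_finitaryOps hB h𝒱 h𝒲 v w, isHomogeneousOp_rankOne hB hVsmul hBgr hv hw⟩

theorem mul_mem_finitaryOps_of_mem_adjointableOps [DecidableEq G] (hB : IsPairing B)
    (h𝒱 : DirectSum.IsInternal 𝒱) (h𝒲 : DirectSum.IsInternal 𝒲) {x a : Module.End Dᵐᵒᵖ V}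
    (hx : x ∈ finitaryOps 𝒱 𝒲 B) (ha : a ∈ adjointableOps 𝒱 B) : x * a ∈ finitaryOps 𝒱 𝒲 B := by
  refine (AddSubgroup.closure_le ((finitaryOps 𝒱 𝒲 B).comap (AddMonoidHom.mulLeft x))).2 ?_ ha
  rintro b ⟨-, hadj⟩
  refine (finitaryOps_le_iff hB (S := (finitaryOps 𝒱 𝒲 B).comap (AddMonoidHom.mulRight b))).2
    (fun _ _ v _ w _ => ?_) hx
  obtain ⟨w', hw'⟩ := hadj w
  rw [AddSubgroup.mem_comap, AddMonoidHom.mulRight_apply, hB.rankOne_mul_of_adjoint hw']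
  exact rankOne_mem_finitaryOps hB h𝒱 h𝒲 v w'

theorem isIdealOf_finitaryOps [DecidableEq G] (hB : IsPairing B) (h𝒱 : DirectSum.IsInternal 𝒱)
    (h𝒲 : DirectSum.IsInternal 𝒲) {S : AddSubgroup (Module.End Dᵐᵒᵖ V)}
    (hFS : finitaryOps 𝒱 𝒲 B ≤ S) (hSL : S ≤ adjointableOps 𝒱 B) :
    IsIdealOf S (finitaryOps 𝒱 𝒲 B) :=
  ⟨hFS, fun a ha _ hx => ⟨mul_mem_finitaryOps hB h𝒱 h𝒲 a hx,
    mul_mem_finitaryOps_of_mem_adjointableOps hB h𝒱 h𝒲 hx (hSL ha)⟩⟩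

theorem exists_homogeneous_isUnit_pairing [DecidableEq G] (hB : IsPairing B)
    (h𝒲 : DirectSum.IsInternal 𝒲)
    (hDdiv : ∀ x : D, x ≠ 0 → (∃ g, x ∈ 𝒟 g) → IsUnit x)
    (hBgr : ∀ a b : G, ∀ w ∈ 𝒲 a, ∀ v ∈ 𝒱 b, B w v ∈ 𝒟 (a * b))
    (hBnd₂ : ∀ v : V, (∀ w : W, B w v = 0) → v = 0) {g : G} {v : V} (hv : v ∈ 𝒱 g)
    (hv0 : v ≠ 0) : ∃ a, ∃ w ∈ 𝒲 a, IsUnit (B w v) := by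
  have hpair : AddMonoidHom.mk' (B · v) (hB.add_left · · v) ≠ 0 :=
    fun h => hv0 (hBnd₂ v fun w => DFunLike.congr_fun h w)
  obtain ⟨a, w, hw, hwv⟩ := h𝒲.exists_apply_ne_zero hpair
  exact ⟨a, w, hw, hDdiv _ hwv ⟨a * g, hBgr a g w hw v hv⟩⟩

theorem exists_mul_ne_zero_finitaryOps [DecidableEq G] [Nontrivial V] (hB : IsPairing B)
    (h𝒱 : DirectSum.IsInternal 𝒱) (h𝒲 : DirectSum.IsInternal 𝒲)
    (hDdiv : ∀ x : D, x ≠ 0 → (∃ g, x ∈ 𝒟 g) → IsUnit x)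
    (hBgr : ∀ a b : G, ∀ w ∈ 𝒲 a, ∀ v ∈ 𝒱 b, B w v ∈ 𝒟 (a * b))
    (hBnd₂ : ∀ v : V, (∀ w : W, B w v = 0) → v = 0) :
    ∃ x ∈ finitaryOps 𝒱 𝒲 B, ∃ y ∈ finitaryOps 𝒱 𝒲 B, x * y ≠ 0 := by
  have hid : AddMonoidHom.id V ≠ 0 := fun h => by
    obtain ⟨v, hv⟩ := exists_ne (0 : V)
    exact hv (DFunLike.congr_fun h v)
  obtain ⟨g, v, hv, hv0⟩ := h𝒱.exists_apply_ne_zero hid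
  obtain ⟨a, w, hw, hunit⟩ := exists_homogeneous_isUnit_pairing hB h𝒲 hDdiv hBgr hBnd₂ hv hv0
  have hmem := rankOne_mem_finitaryOps hB h𝒱 h𝒲 v w
  refine ⟨_, hmem, _, hmem, fun h => hv0 ?_⟩
  have hsq := LinearMap.congr_fun h v
  rw [hB.rankOne_mul_rankOne, hB.rankOne_apply, LinearMap.zero_apply, smul_smul, ← op_mul,
    (hunit.mul hunit).op.smul_eq_zero] at hsq
  exact hsq

theorem finitaryOps_le_of_isIdealOf [DecidableEq G] (hB : IsPairing B)
    (h𝒱 : DirectSum.IsInternal 𝒱) (h𝒲 : DirectSum.IsInternal 𝒲)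
    (hDdiv : ∀ x : D, x ≠ 0 → (∃ g, x ∈ 𝒟 g) → IsUnit x)
    (hBgr : ∀ a b : G, ∀ w ∈ 𝒲 a, ∀ v ∈ 𝒱 b, B w v ∈ 𝒟 (a * b))
    (hBnd₂ : ∀ v : V, (∀ w : W, B w v = 0) → v = 0) {T : AddSubgroup (Module.End Dᵐᵒᵖ V)}
    (hT : IsIdealOf (finitaryOps 𝒱 𝒲 B) T) {y : Module.End Dᵐᵒᵖ V} (hyT : y ∈ T)
    (hy : IsHomogeneousOp 𝒱 y) (hy0 : y ≠ 0) : finitaryOps 𝒱 𝒲 B ≤ T := by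
  obtain ⟨t, ht⟩ := hy
  have hy_add : y.toAddMonoidHom ≠ 0 := fun h => hy0 (LinearMap.ext fun u => DFunLike.congr_fun h u)
  obtain ⟨g, u, hu, hyu⟩ := h𝒱.exists_apply_ne_zero hy_add
  obtain ⟨-, w₀, -, e, he⟩ :=
    exists_homogeneous_isUnit_pairing hB h𝒲 hDdiv hBgr hBnd₂ (ht g u hu) hyu
  refine (finitaryOps_le_iff hB).2 fun _ _ v _ w _ => ?_
  have hmem := rankOne_mem_finitaryOps hB h𝒱 h𝒲
  have hyu_mem : y * hB.rankOne u w ∈ T := (hT.2 _ (hmem u w) y hyT).2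
  rw [← hB.rankOne_mul_rankOne_of_eq_unit he.symm v w, ← hB.mul_rankOne]
  exact (hT.2 _ (hmem _ w₀) _ hyu_mem).1

theorem isGradedSimpleOpSubgroup_finitaryOps [DecidableEq G] [Nontrivial V] (hB : IsPairing B)
    (h𝒱 : DirectSum.IsInternal 𝒱) (h𝒲 : DirectSum.IsInternal 𝒲)
    (hDdiv : ∀ x : D, x ≠ 0 → (∃ g, x ∈ 𝒟 g) → IsUnit x)
    (hBgr : ∀ a b : G, ∀ w ∈ 𝒲 a, ∀ v ∈ 𝒱 b, B w v ∈ 𝒟 (a * b))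
    (hBnd₂ : ∀ v : V, (∀ w : W, B w v = 0) → v = 0) :
    IsGradedSimpleOpSubgroup 𝒱 (finitaryOps 𝒱 𝒲 B) := by
  refine ⟨exists_mul_ne_zero_finitaryOps hB h𝒱 h𝒲 hDdiv hBgr hBnd₂,
    fun T hT hTgr => or_iff_not_imp_left.2 fun hT0 => ?_⟩
  obtain ⟨y, hyT, hy, hy0⟩ := hTgr.exists_isHomogeneousOp_ne_zero hT0
  exact le_antisymm hT.1 (finitaryOps_le_of_isIdealOf hB h𝒱 h𝒲 hDdiv hBgr hBnd₂ hT hyT hy hy0)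

end FinitaryOps

theorem finitary_graded_operators_unique_graded_simple_general
    {G : Type*} [Group G] [DecidableEq G] {D : Type*} [Ring D]
    (𝒟 : G → AddSubgroup D)
    (hDdiv : ∀ x : D, x ≠ 0 → (∃ g, x ∈ 𝒟 g) → IsUnit x)
    -- `V`, a graded right `D`-vector space
    {V : Type*} [AddCommGroup V] [Module Dᵐᵒᵖ V] [Nontrivial V]
    (𝒱 : G → AddSubgroup V)
    (hVdecomp : DirectSum.IsInternal 𝒱)
    (hVsmul : ∀ g h : G, ∀ v ∈ 𝒱 g, ∀ d ∈ 𝒟 h, (MulOpposite.op d) • v ∈ 𝒱 (g * h))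
    -- `W`, a graded left `D`-vector space
    {W : Type*} [AddCommGroup W] [Module D W]
    (𝒲 : G → AddSubgroup W)
    (hWdecomp : DirectSum.IsInternal 𝒲)
    -- the nondegenerate homogeneous `D`-bilinear pairing realizing `W ⊆ V^{gr*}`
    (B : W → V → D)
    (hBadd₁ : ∀ w w' v, B (w + w') v = B w v + B w' v)
    (hBadd₂ : ∀ w v v', B w (v + v') = B w v + B w v')
    (hBl : ∀ (d : D) (w : W) (v : V), B (d • w) v = d * B w v)
    (hBr : ∀ (w : W) (v : V) (d : D), B w ((MulOpposite.op d) • v) = B w v * d)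
    (hBgr : ∀ a b : G, ∀ w ∈ 𝒲 a, ∀ v ∈ 𝒱 b, B w v ∈ 𝒟 (a * b))
    (hBnd₂ : ∀ v : V, (∀ w : W, B w v = 0) → v = 0) :
    -- `𝔏` and `𝔉`
    ∀ 𝔏 𝔉 : AddSubgroup (Module.End Dᵐᵒᵖ V),
    𝔏 = AddSubgroup.closure {A : Module.End Dᵐᵒᵖ V | IsHomogeneousOp 𝒱 (⇑A) ∧
        ∀ w : W, ∃ w' : W, ∀ v : V, B w (A v) = B w' v} →
    𝔉 = AddSubgroup.closure {A : Module.End Dᵐᵒᵖ V | ∃ g₁ g₂ : G, ∃ v ∈ 𝒱 g₁,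
        ∃ w ∈ 𝒲 g₂, ∀ u : V, A u = (MulOpposite.op (B w u)) • v} →
    (IsIdealOf 𝔏 𝔉 ∧ IsGradedOpSubgroup 𝒱 𝔉) ∧
    IsGradedSimpleOpSubgroup 𝒱 𝔉 ∧
    ∀ R : AddSubgroup (Module.End Dᵐᵒᵖ V),
      𝔉 ≤ R → R ≤ 𝔏 → (∀ x ∈ R, ∀ y ∈ R, x * y ∈ R) → IsGradedOpSubgroup 𝒱 R →
      (IsGradedSimpleOpSubgroup 𝒱 R ↔ R = 𝔉) := by
  rintro _ _ rfl rfl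
  have hB : IsPairing B := ⟨hBadd₁, hBadd₂, hBl, hBr⟩
  have hFL : finitaryOps 𝒱 𝒲 B ≤ adjointableOps 𝒱 B :=
    finitaryOps_le_adjointableOps hB hVsmul hBgr
  have hFgr := isGradedOpSubgroup_finitaryOps hB hVdecomp hWdecomp hVsmul hBgr
  have hFsimple := isGradedSimpleOpSubgroup_finitaryOps hB hVdecomp hWdecomp hDdiv hBgr hBnd₂
  refine ⟨⟨isIdealOf_finitaryOps hB hVdecomp hWdecomp hFL le_rfl, hFgr⟩, hFsimple,
    fun R hFR hRL _ _ => ?_⟩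
  exact isGradedSimpleOpSubgroup_iff_eq_of_isIdealOf
    (isIdealOf_finitaryOps hB hVdecomp hWdecomp hFR hRL) hFgr hFsimple

/-- Setting of the structure theorem: `D` a `G`-graded division ring,
`V` a graded right `D`-vector space, `W` a total graded left `D`-vector space paired
with `V` (i.e. a total graded subspace of the graded dual `V^{gr*}` presented via a
nondegenerate homogeneous pairing `B`).  Define `𝔏 = L_W^{gr}(V)` as the additive
closure of the homogeneous operators whose adjoint preserves `W`, and
`𝔉 = F_W^{gr}(V)` as the additive closure of the homogeneous rank-one operators
`v ⊗ w : u ↦ v (w,u)`.  Then `𝔉` is a graded two-sided ideal of `𝔏` and is graded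
simple; consequently a graded ring `R` with `𝔉 ⊆ R ⊆ 𝔏` is graded simple if and
only if `R = 𝔉`. -/
theorem finitary_graded_operators_unique_graded_simple
    {G : Type*} [Group G] [DecidableEq G] {D : Type*} [Ring D] [Nontrivial D]
    (𝒟 : G → AddSubgroup D)
    (hDmul : ∀ g h : G, ∀ x ∈ 𝒟 g, ∀ y ∈ 𝒟 h, x * y ∈ 𝒟 (g * h))
    (hDone : (1 : D) ∈ 𝒟 1)
    (hDdecomp : DirectSum.IsInternal 𝒟)
    (hDdiv : ∀ x : D, x ≠ 0 → (∃ g, x ∈ 𝒟 g) → IsUnit x)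
    -- `V`, a graded right `D`-vector space
    {V : Type*} [AddCommGroup V] [Module Dᵐᵒᵖ V] [Nontrivial V]
    (𝒱 : G → AddSubgroup V)
    (hVdecomp : DirectSum.IsInternal 𝒱)
    (hVsmul : ∀ g h : G, ∀ v ∈ 𝒱 g, ∀ d ∈ 𝒟 h, (MulOpposite.op d) • v ∈ 𝒱 (g * h))
    -- `W`, a graded left `D`-vector space
    {W : Type*} [AddCommGroup W] [Module D W]
    (𝒲 : G → AddSubgroup W)
    (hWdecomp : DirectSum.IsInternal 𝒲)
    (hWsmul : ∀ g h : G, ∀ d ∈ 𝒟 g, ∀ w ∈ 𝒲 h, d • w ∈ 𝒲 (g * h))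
    -- the nondegenerate homogeneous `D`-bilinear pairing realizing `W ⊆ V^{gr*}`
    (B : W → V → D)
    (hBadd₁ : ∀ w w' v, B (w + w') v = B w v + B w' v)
    (hBadd₂ : ∀ w v v', B w (v + v') = B w v + B w v')
    (hBl : ∀ (d : D) (w : W) (v : V), B (d • w) v = d * B w v)
    (hBr : ∀ (w : W) (v : V) (d : D), B w ((MulOpposite.op d) • v) = B w v * d)
    (hBgr : ∀ a b : G, ∀ w ∈ 𝒲 a, ∀ v ∈ 𝒱 b, B w v ∈ 𝒟 (a * b))
    (hBnd₁ : ∀ w : W, (∀ v : V, B w v = 0) → w = 0)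
    (hBnd₂ : ∀ v : V, (∀ w : W, B w v = 0) → v = 0) :
    -- `𝔏` and `𝔉`
    ∀ 𝔏 𝔉 : AddSubgroup (Module.End Dᵐᵒᵖ V),
    𝔏 = AddSubgroup.closure {A : Module.End Dᵐᵒᵖ V | IsHomogeneousOp 𝒱 (⇑A) ∧
        ∀ w : W, ∃ w' : W, ∀ v : V, B w (A v) = B w' v} →
    𝔉 = AddSubgroup.closure {A : Module.End Dᵐᵒᵖ V | ∃ g₁ g₂ : G, ∃ v ∈ 𝒱 g₁,
        ∃ w ∈ 𝒲 g₂, ∀ u : V, A u = (MulOpposite.op (B w u)) • v} →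
    (IsIdealOf 𝔏 𝔉 ∧ IsGradedOpSubgroup 𝒱 𝔉) ∧
    IsGradedSimpleOpSubgroup 𝒱 𝔉 ∧
    ∀ R : AddSubgroup (Module.End Dᵐᵒᵖ V),
      𝔉 ≤ R → R ≤ 𝔏 → (∀ x ∈ R, ∀ y ∈ R, x * y ∈ R) → IsGradedOpSubgroup 𝒱 R →
      (IsGradedSimpleOpSubgroup 𝒱 R ↔ R = 𝔉) :=
  finitary_graded_operators_unique_graded_simple_general 𝒟 hDdiv 𝒱 hVdecomp hVsmul 𝒲 hWdecomp B
    hBadd₁ hBadd₂ hBl hBr hBgr hBnd₂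
end
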